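/- arXiv:2004.09711 — 2 statements merged into one kernel-verified Lean document; each statement's English description precedes it below -/
import Mathlib

section
/- Let I_1 and I_2 be distinct connected subsets of {1, …, r}, each containing the index i. Then v_{I_1,I_1^c}(ϖ_i) ≠ v_{I_2,I_2^c}(ϖ_i). -/
/-!
Put `u := ϖ_i - v`, where `v` is the common value. Then `u` is a combination of the simple roots
supported in `I₁ ∩ I₂`, and `⟨u, α_k^∨⟩ = δ_{ik}` for `k ∈ I₁ ∪ I₂`. The linear automorphisms
preserving the finite spanning set `Φ` form a finite group containing the simple reflections, so
averaging over it gives an inner product `B` invariant under them; in `B` the simple roots are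
pairwise obtuse and `α_k^∨` is `2 B(-, α_k) / B(α_k, α_k)`. Since `B(u, α_k) ≥ 0` wherever the
coefficient of `α_k` in `u` is negative, the negative part `u⁻` of `u` satisfies
`B(u⁻, u⁻) ≤ 0`, so all coefficients of `u` are nonnegative. Then the support of `u` contains `i`
and, inside each connected `I_j`, no Dynkin edge leaves it; hence `I₁` and `I₂` both equal the
support of `u`.
-/

open Module Set Pointwise

theorem SimpleGraph.Connected.subset_of_forall_adj {α : Type*} {G : SimpleGraph α} {s t : Set α}
    (hconn : (G.induce s).Connected) {i : α} (his : i ∈ s) (hit : i ∈ t)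
    (hadj : ∀ a ∈ s, ∀ c ∈ s, G.Adj a c → a ∈ t → c ∈ t) : s ⊆ t := by
  intro k hks
  by_contra hkt
  obtain ⟨w⟩ := hconn.preconnected ⟨i, his⟩ ⟨k, hks⟩
  obtain ⟨d, -, hd, hd'⟩ := w.exists_boundary_dart {p | p.1 ∈ t} hit hkt
  exact hd' (hadj _ d.fst.2 _ d.snd.2 d.adj hd)

section CommRing

variable {R V : Type*} [CommRing R] [AddCommGroup V] [Module R V]

theorem finite_stabilizer_of_span_eq_top {Φ : Set V} (hΦ : Φ.Finite)
    (hspan : Submodule.span R Φ = ⊤) : Finite (MulAction.stabilizer (V ≃ₗ[R] V) Φ) := by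
  have : Finite Φ := hΦ.to_subtype
  have hmaps : ∀ g ∈ MulAction.stabilizer (V ≃ₗ[R] V) Φ, MapsTo g Φ Φ := fun g hg v hv => by
    rw [← MulAction.mem_stabilizer_iff.mp hg]
    exact smul_mem_smul_set hv
  refine Finite.of_injective (fun g (p : Φ) => (⟨g.1 p, hmaps g.1 g.2 p.2⟩ : Φ)) fun g h hgh => ?_
  refine Subtype.ext <| LinearEquiv.toLinearMap_injective <| LinearMap.ext_on hspan fun v hv => ?_
  exact congrArg Subtype.val (congrFun hgh ⟨v, hv⟩)

theorem reflection_mem_stabilizer {Φ : Set V} {x : V} {f : Dual R V} (h : f x = 2)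
    (hΦ : MapsTo (reflection h) Φ Φ) : reflection h ∈ MulAction.stabilizer (V ≃ₗ[R] V) Φ :=
  (bijOn_reflection_of_mapsTo h hΦ).image_eq

theorem mul_apply_self_eq_two_mul_of_reflection_invariant {B : LinearMap.BilinForm R V} {x : V}
    {f : Dual R V} (h : f x = 2) (hB : ∀ v w, B (reflection h v) (reflection h w) = B v w)
    (z : V) : f z * B x x = 2 * B z x := by
  have := hB z x
  rw [reflection_apply, reflection_apply_self, map_sub, map_smul] at this
  simp only [map_neg, LinearMap.sub_apply, LinearMap.smul_apply, smul_eq_mul] at this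
  linear_combination this

variable {ι : Type*} [Fintype ι] (b : Basis ι R V)

theorem Module.Basis.apply_eq_sum_repr_mul (f : Dual R V) (u : V) :
    f u = ∑ j, b.repr u j * f (b j) := by
  conv_lhs => rw [← b.sum_repr u]
  simp only [map_sum, map_smul, smul_eq_mul]

theorem Module.Basis.toDual_apply_eq_sum [DecidableEq ι] (v w : V) :
    b.toDual v w = ∑ i, b.repr v i * b.repr w i := by
  rw [b.apply_eq_sum_repr_mul (b.toDual v)]
  simp only [b.toDual_apply_left, mul_comm]

theorem Module.Basis.isSymm_toDual [DecidableEq ι] : LinearMap.BilinForm.IsSymm b.toDual :=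
  ⟨fun v w => by simp only [b.toDual_apply_eq_sum, mul_comm]⟩

end CommRing

section LinearOrderedField

variable {K V ι : Type*} [Field K] [LinearOrder K] [IsStrictOrderedRing K]
  [AddCommGroup V] [Module K V]

theorem exists_isSymm_pos_invariant_of_finite (W : Subgroup (V ≃ₗ[K] V)) [Finite W]
    (B₀ : LinearMap.BilinForm K V) (hsymm : B₀.IsSymm) (hpos : ∀ v, v ≠ 0 → 0 < B₀ v v) :
    ∃ B : LinearMap.BilinForm K V, B.IsSymm ∧ (∀ v, v ≠ 0 → 0 < B v v) ∧
      ∀ g ∈ W, ∀ v w, B (g v) (g w) = B v w := by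
  have : Fintype W := Fintype.ofFinite W
  let B : LinearMap.BilinForm K V := ∑ g : W, B₀.compl₁₂ (g.1 : V →ₗ[K] V) (g.1 : V →ₗ[K] V)
  have hB (v w : V) : B v w = ∑ g : W, B₀ (g.1 v) (g.1 w) := by simp [B, LinearMap.sum_apply]
  refine ⟨B, ⟨fun v w => by simp only [hB, hsymm.eq (_ : V)]⟩, fun v hv => ?_, fun g hg v w => ?_⟩
  · rw [hB]
    refine Finset.sum_pos' (fun g _ => (hpos _ ?_).le) ⟨1, Finset.mem_univ _, hpos v hv⟩
    exact g.1.map_ne_zero_iff.mpr hv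
  · simp only [hB]
    exact Fintype.sum_equiv (Equiv.mulRight ⟨g, hg⟩) _ _ fun _ => rfl

variable (b : Basis ι K V)

theorem Module.Basis.toDual_apply_self_pos [Fintype ι] [DecidableEq ι] {v : V}
    (hv : v ≠ 0) : 0 < b.toDual v v := by
  obtain ⟨j, hj⟩ : ∃ j, b.repr v j ≠ 0 := by
    by_contra! h
    exact hv (b.repr.injective (Finsupp.ext fun j => by simp [h j]))
  rw [b.toDual_apply_eq_sum]
  exact Finset.sum_pos' (fun i _ => mul_self_nonneg _) ⟨j, Finset.mem_univ j, mul_self_pos.mpr hj⟩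

theorem Module.Basis.repr_nonneg_of_obtuse [Fintype ι] {B : LinearMap.BilinForm K V}
    (hpos : ∀ v, v ≠ 0 → 0 < B v v) (hobtuse : ∀ j k, j ≠ k → B (b j) (b k) ≤ 0) {u : V}
    (hu : ∀ k, b.repr u k < 0 → 0 ≤ B u (b k)) (k : ι) : 0 ≤ b.repr u k := by
  set c := b.equivFun u
  have hc : u = b.equivFun.symm c⁺ - b.equivFun.symm c⁻ := by
    rw [← map_sub, posPart_sub_negPart, LinearEquiv.symm_apply_apply]
  set n := b.equivFun.symm c⁻
  have hpn : B (b.equivFun.symm c⁺) n ≤ 0 := by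
    simp only [n, Basis.equivFun_symm_apply, map_sum, map_smul, LinearMap.sum_apply,
      LinearMap.smul_apply, smul_eq_mul, Pi.negPart_apply, Pi.posPart_apply]
    refine Finset.sum_nonpos fun j _ => ?_
    rw [Finset.mul_sum]
    refine Finset.sum_nonpos fun l _ => ?_
    rcases eq_or_ne l j with rfl | hlj
    · rcases le_total (c l) 0 with h | h
      · simp [posPart_eq_zero.mpr h]
      · simp [negPart_eq_zero.mpr h]
    · exact mul_nonpos_of_nonneg_of_nonpos (negPart_nonneg _)
        (mul_nonpos_of_nonneg_of_nonpos (posPart_nonneg _) (hobtuse l j hlj))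
  have hun : 0 ≤ B u n := by
    simp only [n, Basis.equivFun_symm_apply, map_sum, map_smul, smul_eq_mul, Pi.negPart_apply]
    refine Finset.sum_nonneg fun k _ => ?_
    rcases lt_or_ge (c k) 0 with h | h
    · exact mul_nonneg (negPart_nonneg _) (hu k h)
    · simp [negPart_eq_zero.mpr h]
  have hnn : B n n ≤ 0 := by
    have : B u n = B (b.equivFun.symm c⁺) n - B n n := by rw [hc, map_sub]; rfl
    linarith
  have hn0 : c⁻ = 0 :=
    b.equivFun.symm.map_eq_zero_iff.mp (by_contra fun h => (hpos n h).not_ge hnn)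
  simpa [c] using negPart_eq_zero.mp (congrFun hn0 k)

section NonnegCoefficients

variable {f : Dual K V} {u : V} (hu : ∀ j, 0 ≤ b.repr u j)
  (hf : ∀ j, b.repr u j ≠ 0 → f (b j) ≤ 0)
include hu hf

theorem Module.Basis.repr_mul_apply_nonpos (j : ι) : b.repr u j * f (b j) ≤ 0 := by
  rcases eq_or_ne (b.repr u j) 0 with h | h
  · simp [h]
  · exact mul_nonpos_of_nonneg_of_nonpos (hu j) (hf j h)

theorem Module.Basis.apply_nonpos_of_repr_nonneg [Fintype ι] : f u ≤ 0 := by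
  rw [b.apply_eq_sum_repr_mul f u]
  exact Finset.sum_nonpos fun j _ => b.repr_mul_apply_nonpos hu hf j

theorem Module.Basis.apply_basis_eq_zero_of_repr_nonneg [Fintype ι] (h : f u = 0) {j : ι}
    (hj : b.repr u j ≠ 0) : f (b j) = 0 := by
  rw [b.apply_eq_sum_repr_mul f u] at h
  have := (Finset.sum_eq_zero_iff_of_nonpos fun j _ => b.repr_mul_apply_nonpos hu hf j).mp h j
    (Finset.mem_univ j)
  exact (mul_eq_zero.mp this).resolve_left hj

end NonnegCoefficients

section InvariantForm

variable {coroot : ι → Dual K V} {B : LinearMap.BilinForm K V} (hpos : ∀ v, v ≠ 0 → 0 < B v v)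
  (hB : ∀ k z, coroot k z * B (b k) (b k) = 2 * B z (b k))
include hpos hB

theorem Module.Basis.form_basis_nonpos (hoff : ∀ j k, j ≠ k → coroot k (b j) ≤ 0) {j k : ι}
    (hjk : j ≠ k) : B (b j) (b k) ≤ 0 := by
  nlinarith [hB k (b j), hoff j k hjk, hpos _ (b.ne_zero k)]

theorem Module.Basis.coroot_apply_eq_zero_comm (hsymm : B.IsSymm) {j k : ι}
    (h : coroot k (b j) = 0) : coroot j (b k) = 0 := by
  have hkj := hB k (b j)
  have hjk := hB j (b k)
  rw [h, zero_mul, hsymm.eq] at hkj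
  rw [← hkj] at hjk
  exact (mul_eq_zero.mp hjk).resolve_right (hpos _ (b.ne_zero j)).ne'

theorem Module.Basis.support_repr_eq_of_connected [Fintype ι] [DecidableEq ι] (hsymm : B.IsSymm)
    (hoff : ∀ j k, j ≠ k → coroot k (b j) ≤ 0) {I : Finset ι} {i : ι} (hi : i ∈ I)
    (hconn : ((SimpleGraph.fromRel fun a c => coroot c (b a) ≠ 0).induce (I : Set ι)).Connected)
    {u : V} (hpair : ∀ k ∈ I, coroot k u = if i = k then 1 else 0)
    (hsupp : ∀ j ∉ I, b.repr u j = 0) : (b.repr u).support = I := by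
  have hnonneg : ∀ j, 0 ≤ b.repr u j :=
    b.repr_nonneg_of_obtuse hpos (fun j k => b.form_basis_nonpos hpos hB hoff) fun k hk => by
      have hkI : k ∈ I := by_contra fun h => hk.ne (hsupp k h)
      have := hB k u
      rw [hpair k hkI] at this
      split_ifs at this <;> nlinarith [hpos _ (b.ne_zero k)]
  have hcoroot_nonpos (k : ι) (hk : b.repr u k = 0) (j : ι) (hj : b.repr u j ≠ 0) :
      coroot k (b j) ≤ 0 :=
    hoff j k fun h => hj (h ▸ hk)
  have hi_supp : b.repr u i ≠ 0 := fun h => by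
    have := b.apply_nonpos_of_repr_nonneg hnonneg (hcoroot_nonpos i h)
    rw [hpair i hi, if_pos rfl] at this
    exact one_pos.not_ge this
  have hclosed : ∀ a ∈ (I : Set ι), ∀ c ∈ (I : Set ι),
      (SimpleGraph.fromRel fun a c => coroot c (b a) ≠ 0).Adj a c →
      a ∈ ((b.repr u).support : Set ι) → c ∈ ((b.repr u).support : Set ι) := by
    intro a _ c hc hac ha
    by_contra hc'
    simp only [Finset.mem_coe, Finsupp.mem_support_iff, not_not] at ha hc'
    have hci : i ≠ c := fun h => hi_supp (h ▸ hc')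
    have hca : coroot c (b a) = 0 :=
      b.apply_basis_eq_zero_of_repr_nonneg hnonneg (hcoroot_nonpos c hc')
        (by rw [hpair c hc, if_neg hci]) ha
    rw [SimpleGraph.fromRel_adj] at hac
    exact hac.2.elim (· hca) (· (b.coroot_apply_eq_zero_comm hpos hB hsymm hca))
  ext j
  refine ⟨fun hj => by_contra fun h => Finsupp.mem_support_iff.mp hj (hsupp j h), fun hj => ?_⟩
  exact hconn.subset_of_forall_adj hi (Finsupp.mem_support_iff.mpr hi_supp) hclosed hj

end InvariantForm

end LinearOrderedField

theorem stmt_14_general {V : Type*} [AddCommGroup V] [Module ℚ V] {r : ℕ}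
    (b : Module.Basis (Fin r) ℚ V) (coroot : Fin r → Module.Dual ℚ V)
    (hdiag : ∀ i, coroot i (b i) = 2)
    (hoff : ∀ i j : Fin r, i ≠ j → coroot j (b i) ≤ 0)
    (Φ : Set V) (hΦfin : Φ.Finite) (hΦroot : ∀ i, b i ∈ Φ)
    (hΦrefl : ∀ β ∈ Φ, ∀ i, β - coroot i β • b i ∈ Φ)
    (x : Fin r → Module.Dual ℚ V)
    (hx : ∀ i j : Fin r, x j (b i) = if i = j then 1 else 0)
    (ϖ : Fin r → V)
    (hϖ : ∀ i j : Fin r, coroot j (ϖ i) = if i = j then 1 else 0)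
    (i : Fin r) (I₁ I₂ : Finset (Fin r)) (hne : I₁ ≠ I₂)
    (hi₁ : i ∈ I₁) (hi₂ : i ∈ I₂)
    (hconn₁ : ((SimpleGraph.fromRel fun a c : Fin r => coroot c (b a) ≠ 0).induce
      (↑I₁ : Set (Fin r))).Connected)
    (hconn₂ : ((SimpleGraph.fromRel fun a c : Fin r => coroot c (b a) ≠ 0).induce
      (↑I₂ : Set (Fin r))).Connected)
    (v₁ : V) (hv₁I : ∀ k ∈ I₁, coroot k v₁ = 0)
    (hv₁J : ∀ j ∈ I₁ᶜ, x j (ϖ i - v₁) = 0)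
    (v₂ : V) (hv₂I : ∀ k ∈ I₂, coroot k v₂ = 0)
    (hv₂J : ∀ j ∈ I₂ᶜ, x j (ϖ i - v₂) = 0) :
    v₁ ≠ v₂ := by
  rintro rfl
  have hspan : Submodule.span ℚ Φ = ⊤ :=
    eq_top_mono (Submodule.span_mono (range_subset_iff.mpr hΦroot)) b.span_eq
  have := finite_stabilizer_of_span_eq_top hΦfin hspan
  obtain ⟨B, hsymm, hpos, hinv⟩ :=
    exists_isSymm_pos_invariant_of_finite (MulAction.stabilizer _ Φ) b.toDual b.isSymm_toDual
      fun _ => b.toDual_apply_self_pos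
  have hB (k : Fin r) : ∀ z, coroot k z * B (b k) (b k) = 2 * B z (b k) :=
    mul_apply_self_eq_two_mul_of_reflection_invariant (hdiag k) <| hinv _ <|
      reflection_mem_stabilizer (hdiag k) fun β hβ => by rw [reflection_apply]; exact hΦrefl β hβ k
  have hx_coord (j : Fin r) : x j = b.coord j := b.ext fun k => by
    simp [hx, Finsupp.single_apply, eq_comm]
  have hsupport (I : Finset (Fin r)) (hi : i ∈ I)
      (hconn : ((SimpleGraph.fromRel fun a c : Fin r => coroot c (b a) ≠ 0).induce
        (↑I : Set (Fin r))).Connected)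
      (hvI : ∀ k ∈ I, coroot k v₁ = 0) (hvJ : ∀ j ∈ Iᶜ, x j (ϖ i - v₁) = 0) :
      (b.repr (ϖ i - v₁)).support = I :=
    b.support_repr_eq_of_connected hpos hB hsymm hoff hi hconn
      (fun k hk => by rw [map_sub, hvI k hk, hϖ, sub_zero])
      fun j hj => by rw [← b.coord_apply, ← hx_coord]; exact hvJ j (Finset.mem_compl.mpr hj)
  exact hne ((hsupport I₁ hi₁ hconn₁ hv₁I hv₁J).symm.trans (hsupport I₂ hi₂ hconn₂ hv₂I hv₂J))

/-- Let `I₁` and `I₂` be distinct connected subsets of `{1, …, r}` (for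
the Dynkin graph), each containing the index `i`.  Then
`v_{I₁,I₁ᶜ}(ϖ_i) ≠ v_{I₂,I₂ᶜ}(ϖ_i)`. -/
theorem stmt_14 {V : Type*} [AddCommGroup V] [Module ℚ V] {r : ℕ}
    (b : Module.Basis (Fin r) ℚ V) (coroot : Fin r → Module.Dual ℚ V)
    (hdiag : ∀ i, coroot i (b i) = 2)
    (hoff : ∀ i j : Fin r, i ≠ j → coroot j (b i) ≤ 0)
    (hint : ∀ i j : Fin r, ∃ n : ℤ, coroot j (b i) = (n : ℚ))
    (Φ : Set V) (hΦfin : Φ.Finite) (hΦroot : ∀ i, b i ∈ Φ)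
    (hΦrefl : ∀ β ∈ Φ, ∀ i, β - coroot i β • b i ∈ Φ)
    (x : Fin r → Module.Dual ℚ V)
    (hx : ∀ i j : Fin r, x j (b i) = if i = j then 1 else 0)
    (ϖ : Fin r → V)
    (hϖ : ∀ i j : Fin r, coroot j (ϖ i) = if i = j then 1 else 0)
    (i : Fin r) (I₁ I₂ : Finset (Fin r)) (hne : I₁ ≠ I₂)
    (hi₁ : i ∈ I₁) (hi₂ : i ∈ I₂)
    (hconn₁ : ((SimpleGraph.fromRel fun a c : Fin r => coroot c (b a) ≠ 0).induce
      (↑I₁ : Set (Fin r))).Connected)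
    (hconn₂ : ((SimpleGraph.fromRel fun a c : Fin r => coroot c (b a) ≠ 0).induce
      (↑I₂ : Set (Fin r))).Connected)
    (v₁ : V) (hv₁I : ∀ k ∈ I₁, coroot k v₁ = 0)
    (hv₁J : ∀ j ∈ I₁ᶜ, x j (ϖ i - v₁) = 0)
    (v₂ : V) (hv₂I : ∀ k ∈ I₂, coroot k v₂ = 0)
    (hv₂J : ∀ j ∈ I₂ᶜ, x j (ϖ i - v₂) = 0) :
    v₁ ≠ v₂ :=
  stmt_14_general b coroot hdiag hoff Φ hΦfin hΦroot hΦrefl x hx ϖ hϖ i I₁ I₂ hne hi₁ hi₂ hconn₁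
    hconn₂ v₁ hv₁I hv₁J v₂ hv₂I hv₂J
end

section
/- Fix an index i. The set of μ ∈ V such that (ϖ_i, μ) spans an extremal ray of the Kostka cone 𝒦 is exactly {ϖ_i} ∪ {v_{I,I^c}(ϖ_i) : I ⊆ {1, …, r} connected with i ∈ I}. -/
/-!
The finite root system makes the Weyl group finite, so averaging a positive definite form over
it gives an invariant one, `g`, with `2 g(αₖ, v) = g(αₖ, αₖ) ⟨v, αₖ^∨⟩`. Positivity of `g` gives
two facts about the Cartan matrix: it is nonsingular on every set of simple roots, and a vector
whose negative coordinates sit only where its coroot pairings are nonnegative has nonnegative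
coordinates.

Let `(ϖᵢ, μ)` be extremal and `S` the support of `ϖᵢ - μ`. Then no nonzero vector supported in
`S` is killed by all coroots vanishing on `μ`, since otherwise `μ` could be moved both ways
along it. Counting dimensions, every coroot of `S` must vanish on `μ`, so `μ = v_{S,Sᶜ}(ϖᵢ)`.
Also `S` is connected: the part of `ϖᵢ - μ` off the component of `i` is killed by the coroots
of its own support. Conversely, suppose `μ = v_{I,Iᶜ}(ϖᵢ)` and `(ϖᵢ, μ) = p + q`. Then
`p.1 = t ϖᵢ`, and `p.2 - t μ` is supported in `I` and killed by the coroots of `I`, so it is zero.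
-/

/-- The Kostka cone `𝒦 ⊆ V × V`: pairs `(lam, mu)` of dominant weights such that
`lam - mu` is a nonnegative rational combination of the simple roots. -/
def Kostka {V : Type*} [AddCommGroup V] [Module ℚ V] {r : ℕ}
    (b : Fin r → V) (coroot : Fin r → Module.Dual ℚ V) : Set (V × V) :=
  {p | (∀ i, 0 ≤ coroot i p.1) ∧ (∀ i, 0 ≤ coroot i p.2) ∧
    ∃ c : Fin r → ℚ, (∀ i, 0 ≤ c i) ∧ p.1 - p.2 = ∑ i, c i • b i}

open Module Filter Topology

def IsExtremalRay {M : Type*} [AddCommGroup M] [Module ℚ M] (K : Set M) (p : M) : Prop :=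
  p ≠ 0 ∧ p ∈ K ∧ ∀ q q' : M, q ∈ K → q' ∈ K → q + q' = p →
    (∃ c : ℚ, 0 ≤ c ∧ q = c • p) ∧ (∃ c : ℚ, 0 ≤ c ∧ q' = c • p)

namespace IsExtremalRay

variable {M : Type*} [AddCommGroup M] [Module ℚ M] {K : Set M} {p : M}

theorem of_forall_add_eq (hp : p ≠ 0) (hpK : p ∈ K)
    (h : ∀ q q', q ∈ K → q' ∈ K → q + q' = p → ∃ c : ℚ, 0 ≤ c ∧ q = c • p) :
    IsExtremalRay K p :=
  ⟨hp, hpK, fun q q' hq hq' hqq' => ⟨h q q' hq hq' hqq', h q' q hq' hq (by rwa [add_comm])⟩⟩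

theorem exists_eq_smul_of_add_mem_of_sub_mem (hK : ∀ q ∈ K, (2⁻¹ : ℚ) • q ∈ K)
    (hp : IsExtremalRay K p) {w : M} (hadd : p + w ∈ K) (hsub : p - w ∈ K) :
    ∃ t : ℚ, w = t • p := by
  obtain ⟨⟨c, -, hc⟩, -⟩ := hp.2.2 _ _ (hK _ hadd) (hK _ hsub) (by module)
  refine ⟨2 * c - 1, ?_⟩
  calc w = (2 : ℚ) • ((2⁻¹ : ℚ) • (p + w)) - p := by module
    _ = (2 * c - 1) • p := by rw [hc]; module

end IsExtremalRay

theorem eventually_abs_mul_le {a c : ℚ} (ha : 0 ≤ a) (hc : a = 0 → c = 0) :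
    ∀ᶠ ε in 𝓝 (0 : ℚ), |ε * c| ≤ a := by
  rcases ha.eq_or_lt with rfl | ha
  · simp [hc rfl]
  · have : Tendsto (fun ε : ℚ => |ε * c|) (𝓝 0) (𝓝 0) := by
      simpa using ((tendsto_id (x := 𝓝 (0 : ℚ))).mul_const c).abs
    exact (this.eventually_lt_const ha).mono fun _ => le_of_lt

section Reflection

variable {R M : Type*} [CommRing R] [AddCommGroup M] [Module R M]

theorem two_mul_apply_eq_of_reflection_invariant {x : M} {f : Dual R M} (hf : f x = 2)
    (g : LinearMap.BilinForm R M) (hg : ∀ u v, g (reflection hf u) (reflection hf v) = g u v)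
    (v : M) : 2 * g x v = g x x * f v := by
  have h := hg x v
  simp only [reflection_apply, hf, map_sub, map_smul, LinearMap.sub_apply, LinearMap.smul_apply,
    smul_eq_mul] at h
  linear_combination -h

end Reflection

section WeylGroup

variable {ι V : Type*} [AddCommGroup V] [Module ℚ V]

theorem Module.Basis.exists_bilinForm_pos [Fintype ι] (b : Basis ι ℚ V) :
    ∃ B : LinearMap.BilinForm ℚ V, ∀ v, v ≠ 0 → 0 < B v v := by
  refine ⟨∑ j, (b.coord j).smulRight (b.coord j), fun v hv => ?_⟩
  obtain ⟨j, hj⟩ : ∃ j, b.repr v j ≠ 0 := by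
    by_contra! h
    exact hv (b.repr.injective (by ext j; simp [h j]))
  simp only [LinearMap.sum_apply, LinearMap.smulRight_apply,
    LinearMap.smul_apply, Basis.coord_apply, smul_eq_mul]
  exact Finset.sum_pos' (fun k _ => mul_self_nonneg _) ⟨j, Finset.mem_univ j, mul_self_pos.2 hj⟩

def weylGroup (b : ι → V) (coroot : ι → Dual ℚ V) (hdiag : ∀ k, coroot k (b k) = 2) :
    Subgroup (V ≃ₗ[ℚ] V) :=
  Subgroup.closure (Set.range fun k => reflection (hdiag k))

theorem reflection_mem_weylGroup {b : ι → V} {coroot : ι → Dual ℚ V}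
    (hdiag : ∀ k, coroot k (b k) = 2) (k : ι) : reflection (hdiag k) ∈ weylGroup b coroot hdiag :=
  Subgroup.subset_closure ⟨k, rfl⟩

theorem weylGroup_mapsTo {b : ι → V} {coroot : ι → Dual ℚ V}
    (hdiag : ∀ k, coroot k (b k) = 2) {Φ : Set V} (hΦ : ∀ β ∈ Φ, ∀ k, β - coroot k β • b k ∈ Φ)
    {w : V ≃ₗ[ℚ] V} (hw : w ∈ weylGroup b coroot hdiag) : Set.MapsTo w Φ Φ := by
  induction hw using Subgroup.closure_induction'' with
  | mem _ h | inv_mem _ h =>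
    obtain ⟨k, rfl⟩ := h
    simpa only [reflection_inv, Set.MapsTo, reflection_apply] using fun β hβ => hΦ β hβ k
  | one => exact Set.mapsTo_id Φ
  | mul _ _ _ _ h₁ h₂ => exact h₁.comp h₂

theorem finite_weylGroup [Finite ι] (b : Basis ι ℚ V) {coroot : ι → Dual ℚ V}
    (hdiag : ∀ k, coroot k (b k) = 2) {Φ : Set V}
    (hΦfin : Φ.Finite) (hΦroot : ∀ k, b k ∈ Φ) (hΦ : ∀ β ∈ Φ, ∀ k, β - coroot k β • b k ∈ Φ) :
    Finite (weylGroup b coroot hdiag) := by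
  have := hΦfin.to_subtype
  exact Finite.of_injective (fun w : weylGroup b coroot hdiag => fun j =>
    (⟨w.1 (b j), weylGroup_mapsTo hdiag hΦ w.2 (hΦroot j)⟩ : Φ)) fun w w' h =>
    Subtype.ext (b.ext' fun j => congrArg Subtype.val (congrFun h j))

end WeylGroup

structure IsSymmetrizingForm {ι V : Type*} [AddCommGroup V] [Module ℚ V] (b : ι → V)
    (coroot : ι → Dual ℚ V) (g : LinearMap.BilinForm ℚ V) : Prop where
  pos : ∀ v, v ≠ 0 → 0 < g v v
  two_mul_apply : ∀ k v, 2 * g (b k) v = g (b k) (b k) * coroot k v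

theorem exists_isSymmetrizingForm {ι V : Type*} [Fintype ι] [AddCommGroup V] [Module ℚ V]
    (b : Basis ι ℚ V) (coroot : ι → Dual ℚ V) (hdiag : ∀ k, coroot k (b k) = 2) {Φ : Set V}
    (hΦfin : Φ.Finite) (hΦroot : ∀ k, b k ∈ Φ) (hΦ : ∀ β ∈ Φ, ∀ k, β - coroot k β • b k ∈ Φ) :
    ∃ g, IsSymmetrizingForm b coroot g := by
  set W := weylGroup b coroot hdiag
  have := finite_weylGroup b hdiag hΦfin hΦroot hΦ
  have := Fintype.ofFinite W
  obtain ⟨B, hB⟩ := b.exists_bilinForm_pos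
  let g : LinearMap.BilinForm ℚ V := ∑ w : W, B.compl₁₂ (w.1 : V →ₗ[ℚ] V) w.1
  have hg : ∀ u v, g u v = ∑ w : W, B (w.1 u) (w.1 v) := fun u v => by
    simp [g, LinearMap.sum_apply]
  refine ⟨g, ⟨fun v hv => ?_, fun k v => two_mul_apply_eq_of_reflection_invariant (hdiag k) g
    (fun u v => ?_) v⟩⟩
  · rw [hg]
    exact (hB v hv).trans_le (Finset.single_le_sum (f := fun w : W => B (w.1 v) (w.1 v))
      (fun w _ => (eq_or_ne (w.1 v) 0).elim (fun h => by simp [h]) fun h => (hB _ h).le)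
      (Finset.mem_univ 1))
  · rw [hg, hg]
    exact Fintype.sum_equiv (Equiv.mulRight ⟨_, reflection_mem_weylGroup hdiag k⟩) _ _
      fun w => rfl

section CartanMatrix

variable {ι V : Type*} [AddCommGroup V] [Module ℚ V] {coroot : ι → Dual ℚ V}

theorem coroot_sum_smul [Fintype ι] (b : ι → V) (k : ι) (q : ι → ℚ) :
    coroot k (∑ j, q j • b j) = ∑ j, q j * coroot k (b j) := by
  simp [map_sum]

theorem mul_coroot_nonpos {b : ι → V} (hoff : ∀ j k, j ≠ k → coroot k (b j) ≤ 0) {q : ι → ℚ}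
    (hq : ∀ j, 0 ≤ q j) {k : ι} (hk : q k = 0) (j : ι) : q j * coroot k (b j) ≤ 0 := by
  rcases eq_or_ne j k with rfl | hjk
  · simp [hk]
  · exact mul_nonpos_of_nonneg_of_nonpos (hq j) (hoff j k hjk)

theorem coroot_sum_smul_nonpos [Fintype ι] {b : ι → V} (hoff : ∀ j k, j ≠ k → coroot k (b j) ≤ 0)
    {q : ι → ℚ} (hq : ∀ j, 0 ≤ q j) {k : ι} (hk : q k = 0) : coroot k (∑ j, q j • b j) ≤ 0 := by
  rw [coroot_sum_smul]
  exact Finset.sum_nonpos fun j _ => mul_coroot_nonpos hoff hq hk j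

theorem coroot_eq_zero_of_mem_span_support [Fintype ι] (b : Basis ι ℚ V)
    (hoff : ∀ j k, j ≠ k → coroot k (b j) ≤ 0) {u : V} (hu : ∀ j, 0 ≤ b.repr u j) {k : ι}
    (hk : b.repr u k = 0) (hku : coroot k u = 0) {v : V}
    (hv : v ∈ Submodule.span ℚ (b '' (b.repr u).support)) : coroot k v = 0 := by
  rw [← b.sum_repr u, coroot_sum_smul] at hku
  rw [← b.sum_repr v, coroot_sum_smul]
  refine Finset.sum_eq_zero fun j _ => ?_
  by_cases hj : b.repr v j = 0
  · simp [hj]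
  have huj : b.repr u j ≠ 0 :=
    Finsupp.mem_support_iff.1 (b.mem_span_image.1 hv (Finsupp.mem_support_iff.2 hj))
  have := (Finset.sum_eq_zero_iff_of_nonpos fun j _ => mul_coroot_nonpos hoff hu hk j).1 hku j
    (Finset.mem_univ j)
  rw [(mul_eq_zero.1 this).resolve_left huj, mul_zero]

end CartanMatrix

namespace IsSymmetrizingForm

variable {ι V : Type*} [AddCommGroup V] [Module ℚ V] {coroot : ι → Dual ℚ V}
  {g : LinearMap.BilinForm ℚ V}

theorem apply_self_nonneg {b : ι → V} (hg : IsSymmetrizingForm b coroot g) (v : V) :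
    0 ≤ g v v := by
  rcases eq_or_ne v 0 with rfl | hv
  · simp
  · exact (hg.pos v hv).le

theorem two_mul_apply_sum [Fintype ι] {b : ι → V} (hg : IsSymmetrizingForm b coroot g) (a : ι → ℚ)
    (w : V) : 2 * g (∑ k, a k • b k) w = ∑ k, a k * (g (b k) (b k) * coroot k w) := by
  rw [map_sum, LinearMap.sum_apply, Finset.mul_sum]
  refine Finset.sum_congr rfl fun k _ => ?_
  rw [map_smul, LinearMap.smul_apply, smul_eq_mul, ← hg.two_mul_apply]
  ring

theorem apply_nonpos_of_disjoint [Fintype ι] {b : ι → V} (hg : IsSymmetrizingForm b coroot g)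
    (hoff : ∀ j k, j ≠ k → coroot k (b j) ≤ 0) {p q : ι → ℚ} (hp : ∀ j, 0 ≤ p j)
    (hq : ∀ j, 0 ≤ q j) (hpq : ∀ j, p j = 0 ∨ q j = 0) :
    g (∑ k, p k • b k) (∑ j, q j • b j) ≤ 0 := by
  suffices 2 * g (∑ k, p k • b k) (∑ j, q j • b j) ≤ 0 by linarith
  rw [hg.two_mul_apply_sum]
  refine Finset.sum_nonpos fun k _ => ?_
  rcases hpq k with hk | hk
  · simp [hk]
  · exact mul_nonpos_of_nonneg_of_nonpos (hp k) (mul_nonpos_of_nonneg_of_nonpos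
      (hg.apply_self_nonneg _) (coroot_sum_smul_nonpos hoff hq hk))

theorem eq_zero_of_coroot_eq_zero_on_support [Fintype ι] {b : Basis ι ℚ V}
    (hg : IsSymmetrizingForm b coroot g) {v : V} (hv : ∀ k, b.repr v k ≠ 0 → coroot k v = 0) :
    v = 0 := by
  by_contra hne
  have h := hg.two_mul_apply_sum (b.repr v) v
  rw [b.sum_repr, Finset.sum_eq_zero fun k _ => ?_] at h
  · linarith [hg.pos v hne]
  · by_cases hk : b.repr v k = 0 <;> simp [hk, hv]

theorem eq_of_coroot_eq [Fintype ι] {b : Basis ι ℚ V} (hg : IsSymmetrizingForm b coroot g) {v w : V}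
    (h : ∀ k, coroot k v = coroot k w) : v = w :=
  sub_eq_zero.1 (hg.eq_zero_of_coroot_eq_zero_on_support fun k _ => by rw [map_sub, h, sub_self])

/-- Write `v = v⁺ - v⁻`; then `g v⁻ v⁻ = g v⁻ v⁺ - g v⁻ v ≤ 0`. -/
theorem repr_nonneg_of_coroot_nonneg [Fintype ι] {b : Basis ι ℚ V}
    (hg : IsSymmetrizingForm b coroot g) (hoff : ∀ j k, j ≠ k → coroot k (b j) ≤ 0) {v : V}
    (hv : ∀ k, b.repr v k < 0 → 0 ≤ coroot k v) (k : ι) : 0 ≤ b.repr v k := by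
  set vpos := ∑ j, (b.repr v j)⁺ • b j
  set vneg := ∑ j, (b.repr v j)⁻ • b j
  have hsplit : v = vpos - vneg := by
    simp_rw [vpos, vneg, ← Finset.sum_sub_distrib, ← sub_smul, posPart_sub_negPart, b.sum_repr]
  have hcross : g vneg vpos ≤ 0 := hg.apply_nonpos_of_disjoint hoff (fun _ => negPart_nonneg _)
    (fun _ => posPart_nonneg _) fun j => (le_total 0 (b.repr v j)).imp negPart_eq_zero.2
      posPart_eq_zero.2
  have hpair : 0 ≤ 2 * g vneg v := by
    rw [hg.two_mul_apply_sum]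
    refine Finset.sum_nonneg fun j _ => ?_
    rcases lt_or_ge (b.repr v j) 0 with hj | hj
    · exact mul_nonneg (negPart_nonneg _) (mul_nonneg (hg.apply_self_nonneg _) (hv j hj))
    · simp [negPart_eq_zero.2 hj]
  have hneg : vneg = 0 := by
    by_contra hne
    have : g vneg vneg = g vneg vpos - g vneg v := by
      rw [hsplit]; simp only [map_sub]; ring
    linarith [hg.pos vneg hne]
  have := congrFun (b.repr_sum_self fun j => (b.repr v j)⁻) k
  rw [← negPart_eq_zero, ← this]
  change b.repr vneg k = 0
  simp [hneg]

end IsSymmetrizingForm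

/-- The part of `u` supported away from the component of `i` is annihilated by the coroots of
its own support. -/
theorem IsSymmetrizingForm.connected_induce_support {ι V : Type*} [Fintype ι] [AddCommGroup V]
    [Module ℚ V] {b : Basis ι ℚ V} {coroot : ι → Dual ℚ V} {g : LinearMap.BilinForm ℚ V}
    (hg : IsSymmetrizingForm b coroot g) {u : V} {i : ι} (hi : b.repr u i ≠ 0)
    (hu : ∀ k, b.repr u k ≠ 0 → k ≠ i → coroot k u = 0) :
    ((SimpleGraph.fromRel fun a c : ι => coroot c (b a) ≠ 0).induce
      (↑(b.repr u).support : Set ι)).Connected := by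
  classical
  set S := (b.repr u).support
  set G := (SimpleGraph.fromRel fun a c : ι => coroot c (b a) ≠ 0).induce (↑S : Set ι)
  have hiS : i ∈ S := Finsupp.mem_support_iff.2 hi
  set R : Set ι := {j | ∃ h : j ∈ S, G.Reachable ⟨i, hiS⟩ ⟨j, h⟩}
  have hcut : ∀ j ∈ R, ∀ k ∈ S, k ∉ R → coroot k (b j) = 0 := by
    rintro j ⟨hjS, hj⟩ k hkS hk
    by_contra hA
    refine hk ⟨hkS, hj.trans (SimpleGraph.Adj.reachable ?_)⟩
    simp only [G, SimpleGraph.comap_adj, Function.Embedding.coe_subtype,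
      SimpleGraph.fromRel_adj]
    exact ⟨fun h => hk (h ▸ ⟨hjS, hj⟩), Or.inl hA⟩
  have hd : ∑ j, Rᶜ.indicator (b.repr u) j • b j = 0 := by
    refine hg.eq_zero_of_coroot_eq_zero_on_support fun k hk => ?_
    rw [b.repr_sum_self] at hk
    obtain ⟨hkR, hkS⟩ := Set.indicator_apply_ne_zero.1 hk
    have hki : k ≠ i := fun h => hkR (h ▸ ⟨hiS, SimpleGraph.Reachable.refl _⟩)
    have hsplit : coroot k u
        = ∑ j, R.indicator (b.repr u) j * coroot k (b j) +
          coroot k (∑ j, Rᶜ.indicator (b.repr u) j • b j) := by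
      conv_lhs => rw [← b.sum_repr u]
      rw [coroot_sum_smul, coroot_sum_smul, ← Finset.sum_add_distrib]
      simp_rw [← add_mul, Set.indicator_self_add_compl_apply]
    rwa [hu k hkS hki, Finset.sum_eq_zero fun j _ => ?_, zero_add, eq_comm] at hsplit
    by_cases hj : j ∈ R
    · rw [hcut j hj k (Finsupp.mem_support_iff.2 hkS) hkR, mul_zero]
    · rw [Set.indicator_of_notMem hj, zero_mul]
  have hR : ∀ j (hj : j ∈ S), G.Reachable ⟨i, hiS⟩ ⟨j, hj⟩ := by
    intro j hj
    by_contra hjR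
    have := congrFun (b.repr_sum_self (Rᶜ.indicator (b.repr u))) j
    rw [hd, map_zero, Finsupp.zero_apply, eq_comm,
      Set.indicator_of_mem (show j ∉ R from fun ⟨_, h⟩ => hjR h)] at this
    exact Finsupp.mem_support_iff.1 hj this
  exact (SimpleGraph.connected_iff_exists_forall_reachable _).2 ⟨⟨i, hiS⟩, fun ⟨j, hj⟩ => hR j hj⟩

section Kostka

variable {V : Type*} [AddCommGroup V] [Module ℚ V] {r : ℕ} {b : Basis (Fin r) ℚ V}
  {coroot : Fin r → Dual ℚ V}

theorem mem_kostka_iff {p : V × V} :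
    p ∈ Kostka b coroot ↔
      (∀ k, 0 ≤ coroot k p.1) ∧ (∀ k, 0 ≤ coroot k p.2) ∧ ∀ j, 0 ≤ b.repr (p.1 - p.2) j := by
  refine and_congr_right fun _ => and_congr_right fun _ =>
    ⟨?_, fun h => ⟨_, h, (b.sum_repr _).symm⟩⟩
  rintro ⟨c, hc, h⟩ j
  rw [h, b.repr_sum_self]
  exact hc j

theorem smul_mem_kostka {t : ℚ} (ht : 0 ≤ t) {p : V × V} (hp : p ∈ Kostka b coroot) :
    t • p ∈ Kostka b coroot := by
  obtain ⟨h₁, h₂, h₃⟩ := mem_kostka_iff.1 hp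
  refine mem_kostka_iff.2 ⟨fun k => ?_, fun k => ?_, fun j => ?_⟩
  · simpa using mul_nonneg ht (h₁ k)
  · simpa using mul_nonneg ht (h₂ k)
  · simpa [← smul_sub] using mul_nonneg ht (h₃ j)

theorem add_mem_kostka_of_abs_le {lam μ w : V} (h : (lam, μ) ∈ Kostka b coroot)
    (hcoroot : ∀ k, |coroot k w| ≤ coroot k μ) (hrepr : ∀ j, |b.repr w j| ≤ b.repr (lam - μ) j) :
    (lam, μ + w) ∈ Kostka b coroot := by
  obtain ⟨h₁, -, -⟩ := mem_kostka_iff.1 h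
  refine mem_kostka_iff.2 ⟨h₁, fun k => ?_, fun j => ?_⟩
  · simp only [map_add]
    linarith [neg_le_of_abs_le (hcoroot k)]
  · have : lam - (μ + w) = lam - μ - w := by abel
    simpa [this] using (le_abs_self _).trans (hrepr j)

/-- `(lam, μ ± ε • v)` lies in the cone for small `ε > 0`. -/
theorem IsExtremalRay.eq_zero_of_mem_span_support {lam μ : V}
    (hext : IsExtremalRay (Kostka b coroot) (lam, μ)) (hlam : lam ≠ 0) {v : V}
    (hv : v ∈ Submodule.span ℚ (b '' (b.repr (lam - μ)).support))
    (hvμ : ∀ k, coroot k μ = 0 → coroot k v = 0) : v = 0 := by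
  obtain ⟨-, h₂, h₃⟩ := mem_kostka_iff.1 hext.2.1
  have hsupp (j) (hj : b.repr (lam - μ) j = 0) : b.repr v j = 0 := by
    by_contra h
    exact Finsupp.mem_support_iff.1 (b.mem_span_image.1 hv (Finsupp.mem_support_iff.2 h)) hj
  have hsmall : ∀ᶠ ε in 𝓝[>] (0 : ℚ), (∀ k, |ε * coroot k v| ≤ coroot k μ) ∧
      ∀ j, |ε * b.repr v j| ≤ b.repr (lam - μ) j :=
    ((eventually_all.2 fun k => eventually_abs_mul_le (h₂ k) (hvμ k)).and
      (eventually_all.2 fun j => eventually_abs_mul_le (h₃ j) (hsupp j))).filter_mono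
      nhdsWithin_le_nhds
  obtain ⟨ε, ⟨hεμ, hεv⟩, hε⟩ := (hsmall.and self_mem_nhdsWithin).exists
  have hadd : (lam, μ) + (0, ε • v) ∈ Kostka b coroot := by
    rw [Prod.mk_add_mk, add_zero]
    refine add_mem_kostka_of_abs_le hext.2.1 (fun k => ?_) fun j => ?_
    · rw [map_smul, smul_eq_mul]; exact hεμ k
    · rw [map_smul, Finsupp.smul_apply, smul_eq_mul]; exact hεv j
  have hsub : (lam, μ) - (0, ε • v) ∈ Kostka b coroot := by
    rw [Prod.mk_sub_mk, sub_zero, sub_eq_add_neg]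
    refine add_mem_kostka_of_abs_le hext.2.1 (fun k => ?_) fun j => ?_
    · rw [map_neg, abs_neg, map_smul, smul_eq_mul]; exact hεμ k
    · rw [map_neg, Finsupp.neg_apply, abs_neg, map_smul, Finsupp.smul_apply, smul_eq_mul]
      exact hεv j
  have hK (q) (hq : q ∈ Kostka b coroot) : (2⁻¹ : ℚ) • q ∈ Kostka b coroot :=
    smul_mem_kostka (by norm_num) hq
  obtain ⟨t, ht⟩ := hext.exists_eq_smul_of_add_mem_of_sub_mem hK hadd hsub
  simp only [Prod.smul_mk, Prod.mk.injEq] at ht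
  have ht0 : t = 0 := (smul_eq_zero.1 ht.1.symm).resolve_right hlam
  simpa [ht0, hε.ne'] using ht.2

end Kostka

theorem IsSymmetrizingForm.eq_coroot_smul_of_add_eq {ι V : Type*} [Fintype ι] [DecidableEq ι]
    [AddCommGroup V] [Module ℚ V] {b : Basis ι ℚ V} {coroot : ι → Dual ℚ V}
    {g : LinearMap.BilinForm ℚ V} (hg : IsSymmetrizingForm b coroot g) {w : V} {i : ι}
    (hw : ∀ k, coroot k w = if i = k then 1 else 0) {p q : V} (hp : ∀ k, 0 ≤ coroot k p)
    (hq : ∀ k, 0 ≤ coroot k q) (h : p + q = w) : p = coroot i p • w := by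
  refine hg.eq_of_coroot_eq fun k => ?_
  rw [map_smul, hw, smul_eq_mul]
  split_ifs with hik
  · rw [hik, mul_one]
  · have : coroot k p + coroot k q = 0 := by rw [← map_add, h, hw, if_neg hik]
    rw [((add_eq_zero_iff_of_nonneg (hp k) (hq k)).1 this).1, mul_zero]

section FundamentalWeight

variable {V : Type*} [AddCommGroup V] [Module ℚ V] {r : ℕ} {b : Basis (Fin r) ℚ V}
  {coroot : Fin r → Dual ℚ V} {g : LinearMap.BilinForm ℚ V} {w μ : V} {i : Fin r}

theorem ne_zero_of_coroot_eq_ite (hw : ∀ k, coroot k w = if i = k then 1 else 0) : w ≠ 0 := by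
  rintro rfl
  simpa using hw i

theorem coroot_sub_eq_zero_of_ne (hw : ∀ k, coroot k w = if i = k then 1 else 0) {k : Fin r}
    (hk : coroot k μ = 0) (hki : k ≠ i) : coroot k (w - μ) = 0 := by
  rw [map_sub, hw, if_neg (Ne.symm hki), hk, sub_zero]

theorem IsExtremalRay.coroot_eq_zero_and_repr_ne_zero
    (hoff : ∀ j k, j ≠ k → coroot k (b j) ≤ 0) (hw : ∀ k, coroot k w = if i = k then 1 else 0)
    (hext : IsExtremalRay (Kostka b coroot) (w, μ)) (hμ : μ ≠ w) :
    coroot i μ = 0 ∧ b.repr (w - μ) i ≠ 0 := by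
  obtain ⟨-, -, hc⟩ := mem_kostka_iff.1 hext.2.1
  have hiμ : coroot i μ = 0 := by
    by_contra hiμ
    refine sub_ne_zero.2 hμ.symm (hext.eq_zero_of_mem_span_support
      (ne_zero_of_coroot_eq_ite hw) (b.mem_span_image.2 subset_rfl) fun k hk => ?_)
    exact coroot_sub_eq_zero_of_ne hw hk fun h => hiμ (h ▸ hk)
  refine ⟨hiμ, fun hi => ?_⟩
  have := coroot_sum_smul_nonpos hoff hc hi
  rw [b.sum_repr, map_sub, hw, if_pos rfl, hiμ] at this
  norm_num at this

/-- The coroots vanishing on `μ` cut out only `0` in the span of the support of `w - μ`, so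
there are at least as many of them on that support as the support has elements. -/
theorem IsExtremalRay.coroot_eq_zero_of_repr_ne_zero
    (hoff : ∀ j k, j ≠ k → coroot k (b j) ≤ 0) (hw : ∀ k, coroot k w = if i = k then 1 else 0)
    (hext : IsExtremalRay (Kostka b coroot) (w, μ)) (hμ : μ ≠ w) {k : Fin r}
    (hk : b.repr (w - μ) k ≠ 0) : coroot k μ = 0 := by
  classical
  obtain ⟨-, hi⟩ := hext.coroot_eq_zero_and_repr_ne_zero hoff hw hμ
  obtain ⟨-, -, hc⟩ := mem_kostka_iff.1 hext.2.1
  set S := (b.repr (w - μ)).support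
  by_contra hkμ
  set T := S.filter fun k => coroot k μ = 0
  have hTS : T.card < S.card :=
    Finset.card_lt_card (Finset.filter_ssubset.2 ⟨k, Finsupp.mem_support_iff.2 hk, hkμ⟩)
  have := Module.Finite.of_basis b
  have hP : finrank ℚ (Submodule.span ℚ (b '' S)) = S.card := by
    rw [Set.image_eq_range, finrank_span_eq_card (b := fun j : (S : Set (Fin r)) => b j)
      (b.linearIndependent.comp _ Subtype.val_injective)]
    simp
  let ψ : Submodule.span ℚ (b '' S) →ₗ[ℚ] T → ℚ :=
    LinearMap.pi fun l => coroot l ∘ₗ (Submodule.span ℚ (b '' S)).subtype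
  obtain ⟨⟨v, hvP⟩, hψ, hv0⟩ := Submodule.exists_mem_ne_zero_of_ne_bot
    (LinearMap.ker_ne_bot_of_finrank_lt (f := ψ) (by simpa [hP] using hTS))
  refine hv0 (Subtype.ext (hext.eq_zero_of_mem_span_support (ne_zero_of_coroot_eq_ite hw) hvP
    fun l hl => ?_))
  by_cases hlS : l ∈ S
  · exact congr_fun (LinearMap.mem_ker.1 hψ) ⟨l, Finset.mem_filter.2 ⟨hlS, hl⟩⟩
  · have hli : l ≠ i := fun h => hlS (h ▸ Finsupp.mem_support_iff.2 hi)
    exact coroot_eq_zero_of_mem_span_support b hoff hc (Finsupp.notMem_support_iff.1 hlS)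
      (coroot_sub_eq_zero_of_ne hw hl hli) hvP

theorem IsExtremalRay.eq_or_exists_connected (hg : IsSymmetrizingForm b coroot g)
    (hoff : ∀ j k, j ≠ k → coroot k (b j) ≤ 0) (hw : ∀ k, coroot k w = if i = k then 1 else 0)
    (hext : IsExtremalRay (Kostka b coroot) (w, μ)) :
    μ = w ∨ ∃ I : Finset (Fin r), i ∈ I ∧
      ((SimpleGraph.fromRel fun a c : Fin r => coroot c (b a) ≠ 0).induce
        (↑I : Set (Fin r))).Connected ∧
      (∀ k ∈ I, coroot k μ = 0) ∧ ∀ j ∈ Iᶜ, b.repr (w - μ) j = 0 := by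
  refine or_iff_not_imp_left.2 fun hμ => ⟨(b.repr (w - μ)).support, ?_, ?_, ?_, ?_⟩
  · exact Finsupp.mem_support_iff.2 (hext.coroot_eq_zero_and_repr_ne_zero hoff hw hμ).2
  · exact hg.connected_induce_support (hext.coroot_eq_zero_and_repr_ne_zero hoff hw hμ).2
      fun k hk hki => coroot_sub_eq_zero_of_ne hw
        (hext.coroot_eq_zero_of_repr_ne_zero hoff hw hμ hk) hki
  · exact fun k hk => hext.coroot_eq_zero_of_repr_ne_zero hoff hw hμ (Finsupp.mem_support_iff.1 hk)
  · exact fun j hj => Finsupp.notMem_support_iff.1 (Finset.mem_compl.1 hj)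

theorem mem_kostka_of_support_subset (hg : IsSymmetrizingForm b coroot g)
    (hoff : ∀ j k, j ≠ k → coroot k (b j) ≤ 0) (hw : ∀ k, coroot k w = if i = k then 1 else 0)
    (I : Finset (Fin r)) (hI : ∀ k ∈ I, coroot k μ = 0) (hIc : ∀ j ∉ I, b.repr (w - μ) j = 0) :
    (w, μ) ∈ Kostka b coroot := by
  have hw₀ : ∀ k, 0 ≤ coroot k w := fun k => by rw [hw]; split_ifs <;> norm_num
  have hc : ∀ j, 0 ≤ b.repr (w - μ) j := hg.repr_nonneg_of_coroot_nonneg hoff fun k hk => by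
    have hkI : k ∈ I := by_contra fun h => hk.ne (hIc k h)
    rw [map_sub, hI k hkI, sub_zero]
    exact hw₀ k
  refine mem_kostka_iff.2 ⟨hw₀, fun k => ?_, hc⟩
  by_cases hkI : k ∈ I
  · rw [hI k hkI]
  · have := coroot_sum_smul_nonpos hoff hc (hIc k hkI)
    rw [b.sum_repr, map_sub] at this
    linarith [hw₀ k]

theorem isExtremalRay_kostka_of_support_subset (hg : IsSymmetrizingForm b coroot g)
    (hoff : ∀ j k, j ≠ k → coroot k (b j) ≤ 0) (hw : ∀ k, coroot k w = if i = k then 1 else 0)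
    (I : Finset (Fin r)) (hI : ∀ k ∈ I, coroot k μ = 0) (hIc : ∀ j ∉ I, b.repr (w - μ) j = 0) :
    IsExtremalRay (Kostka b coroot) (w, μ) := by
  refine .of_forall_add_eq (by simp [ne_zero_of_coroot_eq_ite hw])
    (mem_kostka_of_support_subset hg hoff hw I hI hIc) fun p q hp hq hpq => ?_
  obtain ⟨hp₁, hp₂, hp₃⟩ := mem_kostka_iff.1 hp
  obtain ⟨hq₁, hq₂, hq₃⟩ := mem_kostka_iff.1 hq
  obtain ⟨h₁, h₂⟩ : p.1 + q.1 = w ∧ p.2 + q.2 = μ := Prod.ext_iff.1 hpq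
  set t := coroot i p.1
  have hp₁t : p.1 = t • w := hg.eq_coroot_smul_of_add_eq hw hp₁ hq₁ h₁
  have hrepr (j) (hj : j ∉ I) : b.repr (p.1 - p.2) j = 0 := by
    have : b.repr (p.1 - p.2) j + b.repr (q.1 - q.2) j = 0 := by
      rw [← Finsupp.add_apply, ← map_add, ← hIc j hj, ← h₁, ← h₂]
      congr 2
      abel
    exact ((add_eq_zero_iff_of_nonneg (hp₃ j) (hq₃ j)).1 this).1
  have hcoroot (k) (hk : k ∈ I) : coroot k p.2 = 0 := by
    have : coroot k p.2 + coroot k q.2 = 0 := by rw [← map_add, h₂, hI k hk]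
    exact ((add_eq_zero_iff_of_nonneg (hp₂ k) (hq₂ k)).1 this).1
  have hp₂t : p.2 = t • μ := by
    have hv : p.2 - t • μ = t • (w - μ) - (p.1 - p.2) := by rw [hp₁t]; module
    refine sub_eq_zero.1 (hg.eq_zero_of_coroot_eq_zero_on_support fun k hk => ?_)
    have hkI : k ∈ I := by
      by_contra hkI
      rw [hv, map_sub, map_smul, Finsupp.sub_apply, Finsupp.smul_apply, hIc k hkI, hrepr k hkI,
        smul_zero, sub_zero] at hk
      exact hk rfl
    simp [hcoroot k hkI, hI k hkI]
  exact ⟨t, hp₁ i, Prod.ext hp₁t hp₂t⟩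

end FundamentalWeight

theorem stmt_15_general {V : Type*} [AddCommGroup V] [Module ℚ V] {r : ℕ}
    (b : Module.Basis (Fin r) ℚ V) (coroot : Fin r → Module.Dual ℚ V)
    (hdiag : ∀ i, coroot i (b i) = 2)
    (hoff : ∀ i j : Fin r, i ≠ j → coroot j (b i) ≤ 0)
    (Φ : Set V) (hΦfin : Φ.Finite) (hΦroot : ∀ i, b i ∈ Φ)
    (hΦrefl : ∀ β ∈ Φ, ∀ i, β - coroot i β • b i ∈ Φ)
    (x : Fin r → Module.Dual ℚ V)
    (hx : ∀ i j : Fin r, x j (b i) = if i = j then 1 else 0)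
    (ϖ : Fin r → V)
    (hϖ : ∀ i j : Fin r, coroot j (ϖ i) = if i = j then 1 else 0)
    (i : Fin r) :
    ∀ mu : V,
      ((ϖ i, mu) ≠ (0 : V × V) ∧ (ϖ i, mu) ∈ Kostka (⇑b) coroot ∧
        ∀ p q : V × V, p ∈ Kostka (⇑b) coroot → q ∈ Kostka (⇑b) coroot →
          p + q = (ϖ i, mu) →
            (∃ c : ℚ, 0 ≤ c ∧ p = c • (ϖ i, mu)) ∧
            (∃ c : ℚ, 0 ≤ c ∧ q = c • (ϖ i, mu)))
      ↔ (mu = ϖ i ∨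
          ∃ I : Finset (Fin r), i ∈ I ∧
            ((SimpleGraph.fromRel fun a c : Fin r => coroot c (b a) ≠ 0).induce
              (↑I : Set (Fin r))).Connected ∧
            (∀ k ∈ I, coroot k mu = 0) ∧ (∀ j ∈ Iᶜ, x j (ϖ i - mu) = 0)) := by
  obtain ⟨g, hg⟩ := exists_isSymmetrizingForm b coroot hdiag hΦfin hΦroot hΦrefl
  obtain rfl : x = fun j => b.coord j := funext fun j => b.ext fun k => by
    simp [hx, Finsupp.single_apply]
  intro μ
  change IsExtremalRay (Kostka b coroot) (ϖ i, μ) ↔ _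
  simp only [Basis.coord_apply]
  refine ⟨(·.eq_or_exists_connected hg hoff (hϖ i)), ?_⟩
  rintro (rfl | ⟨I, -, -, hI, hIc⟩)
  · exact isExtremalRay_kostka_of_support_subset hg hoff (hϖ i) ∅ (by simp) (by simp)
  · exact isExtremalRay_kostka_of_support_subset hg hoff (hϖ i) I hI
      fun j hj => hIc j (Finset.mem_compl.2 hj)

/-- Fix an index `i`.  The set of `mu ∈ V` such that `(ϖ_i, mu)` spans
an extremal ray of the Kostka cone `𝒦` is exactly
`{ϖ_i} ∪ {v_{I,Iᶜ}(ϖ_i) : I ⊆ {1, …, r}` connected with `i ∈ I}`. -/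
theorem stmt_15 {V : Type*} [AddCommGroup V] [Module ℚ V] {r : ℕ}
    (b : Module.Basis (Fin r) ℚ V) (coroot : Fin r → Module.Dual ℚ V)
    (hdiag : ∀ i, coroot i (b i) = 2)
    (hoff : ∀ i j : Fin r, i ≠ j → coroot j (b i) ≤ 0)
    (hint : ∀ i j : Fin r, ∃ n : ℤ, coroot j (b i) = (n : ℚ))
    (Φ : Set V) (hΦfin : Φ.Finite) (hΦroot : ∀ i, b i ∈ Φ)
    (hΦrefl : ∀ β ∈ Φ, ∀ i, β - coroot i β • b i ∈ Φ)
    (x : Fin r → Module.Dual ℚ V)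
    (hx : ∀ i j : Fin r, x j (b i) = if i = j then 1 else 0)
    (ϖ : Fin r → V)
    (hϖ : ∀ i j : Fin r, coroot j (ϖ i) = if i = j then 1 else 0)
    (i : Fin r) :
    ∀ mu : V,
      ((ϖ i, mu) ≠ (0 : V × V) ∧ (ϖ i, mu) ∈ Kostka (⇑b) coroot ∧
        ∀ p q : V × V, p ∈ Kostka (⇑b) coroot → q ∈ Kostka (⇑b) coroot →
          p + q = (ϖ i, mu) →
            (∃ c : ℚ, 0 ≤ c ∧ p = c • (ϖ i, mu)) ∧
            (∃ c : ℚ, 0 ≤ c ∧ q = c • (ϖ i, mu)))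
      ↔ (mu = ϖ i ∨
          ∃ I : Finset (Fin r), i ∈ I ∧
            ((SimpleGraph.fromRel fun a c : Fin r => coroot c (b a) ≠ 0).induce
              (↑I : Set (Fin r))).Connected ∧
            (∀ k ∈ I, coroot k mu = 0) ∧ (∀ j ∈ Iᶜ, x j (ϖ i - mu) = 0)) :=
  stmt_15_general b coroot hdiag hoff Φ hΦfin hΦroot hΦrefl x hx ϖ hϖ i
end
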